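/- In a generalized group satisfying e(s·t) = e(s)·e(t) for all s, t, the inverse of a product satisfies (s·t)⁻¹ = e(s)·t⁻¹·s⁻¹·e(t). -/

import Mathlib

universe u v

structure GenGroup (T : Type u) where
  mul : T → T → T
  mul_assoc : ∀ a b c : T, mul (mul a b) c = mul a (mul b c)
  e : T → T
  mul_e : ∀ t, mul t (e t) = t
  e_mul : ∀ t, mul (e t) t = t
  e_unique : ∀ t u : T, mul t u = t → mul u t = t → u = e t
  inv : T → T
  mul_inv : ∀ t, mul t (inv t) = e t
  inv_mul : ∀ t, mul (inv t) t = e t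

/-!
Under `e (s * t) = e s * e t`, every `e a` is idempotent, `e a⁻¹ = e a`, and an element `x` with
`e x = e a` and `a * x = e a` must be `a⁻¹`. Idempotents `f = e s`, `g = e t` satisfy `f g f = f`,
and conjugating `e x` by `a` gives `a (e x) a⁻¹ = e a`. Hence `X = e s · t⁻¹ · s⁻¹ · e t` has
`e X = e s e t = e (s t)` and `s t X = s (t (e s) t⁻¹) s⁻¹ (e t) = s (e t) s⁻¹ (e t) = e s e t`,
so `X = (s t)⁻¹`.
-/

namespace GenGroup

variable {T : Type u} (G : GenGroup T)

local infixl:70 " ⋆ " => G.mul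

theorem e_eq_self_of_mul_self {x : T} (h : x ⋆ x = x) : G.e x = x :=
  (G.e_unique x x h h).symm

theorem e_mul_e_self (a : T) : G.e a ⋆ G.e a = G.e a :=
  calc G.e a ⋆ G.e a = G.e a ⋆ (a ⋆ G.inv a) := by rw [G.mul_inv]
    _ = G.e a := by rw [← G.mul_assoc, G.e_mul, G.mul_inv]

theorem e_e (a : T) : G.e (G.e a) = G.e a :=
  G.e_eq_self_of_mul_self (G.e_mul_e_self a)

theorem e_inv (he : ∀ s t : T, G.e (s ⋆ t) = G.e s ⋆ G.e t) (a : T) :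
    G.e (G.inv a) = G.e a := by
  have left : G.e a ⋆ G.e (G.inv a) = G.e a := by rw [← he, G.mul_inv, e_e]
  have right : G.e (G.inv a) ⋆ G.e a = G.e a := by rw [← he, G.inv_mul, e_e]
  rw [G.e_unique _ _ left right, e_e]

theorem eq_inv_of_mul_eq_e (he : ∀ s t : T, G.e (s ⋆ t) = G.e s ⋆ G.e t) {a x : T}
    (hx : G.e x = G.e a) (h : a ⋆ x = G.e a) : x = G.inv a :=
  calc x = G.inv a ⋆ a ⋆ x := by rw [G.inv_mul, ← hx, G.e_mul]
    _ = G.inv a ⋆ G.e (G.inv a) := by rw [G.mul_assoc, h, G.e_inv he]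
    _ = G.inv a := G.mul_e _

theorem e_mul_e_mul_e (he : ∀ s t : T, G.e (s ⋆ t) = G.e s ⋆ G.e t) (s t : T) :
    G.e s ⋆ G.e t ⋆ G.e s = G.e s := by
  set f := G.e s with hf
  set c := f ⋆ G.e t ⋆ f
  have hff : f ⋆ f = f := G.e_mul_e_self s
  have right : c ⋆ f = c := by simp only [c, G.mul_assoc, hff]
  have left : f ⋆ c = c := by simp only [c, ← G.mul_assoc, hff]
  have hc : G.e c = c := by simp only [c, he, hf, e_e]
  -- `f` is a two-sided identity for `c`, so uniqueness of `e c` forces `f = c`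
  rw [G.e_unique c f right left, hc]

theorem mul_e_mul_inv (he : ∀ s t : T, G.e (s ⋆ t) = G.e s ⋆ G.e t) (a x : T) :
    a ⋆ G.e x ⋆ G.inv a = G.e a := by
  have idem : (a ⋆ G.e x ⋆ G.inv a) ⋆ (a ⋆ G.e x ⋆ G.inv a) = a ⋆ G.e x ⋆ G.inv a :=
    calc (a ⋆ G.e x ⋆ G.inv a) ⋆ (a ⋆ G.e x ⋆ G.inv a)
        = a ⋆ (G.e x ⋆ (G.inv a ⋆ a) ⋆ G.e x) ⋆ G.inv a := by simp only [G.mul_assoc]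
      _ = a ⋆ G.e x ⋆ G.inv a := by rw [G.inv_mul, G.e_mul_e_mul_e he]
  have he_conj : G.e (a ⋆ G.e x ⋆ G.inv a) = G.e a := by
    rw [he, he, G.e_inv he, e_e, G.e_mul_e_mul_e he]
  rw [← he_conj, G.e_eq_self_of_mul_self idem]

theorem mul_inv_rev (he : ∀ s t : T, G.e (s ⋆ t) = G.e s ⋆ G.e t) (s t : T) :
    G.inv (s ⋆ t) = G.e s ⋆ G.inv t ⋆ G.inv s ⋆ G.e t := by
  refine (G.eq_inv_of_mul_eq_e he ?_ ?_).symm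
  · simp only [he, e_e, G.e_inv he]
    rw [G.e_mul_e_mul_e he]
  · calc s ⋆ t ⋆ (G.e s ⋆ G.inv t ⋆ G.inv s ⋆ G.e t)
        = s ⋆ (t ⋆ G.e s ⋆ G.inv t) ⋆ G.inv s ⋆ G.e t := by simp only [G.mul_assoc]
      _ = G.e s ⋆ G.e t := by rw [G.mul_e_mul_inv he, G.mul_e_mul_inv he]
      _ = G.e (s ⋆ t) := (he s t).symm

end GenGroup

theorem inv_mul_formula {T : Type u} (G : GenGroup T)
    (he : ∀ s t : T, G.e (G.mul s t) = G.mul (G.e s) (G.e t)) (s t : T) :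
    G.inv (G.mul s t) =
      G.mul (G.mul (G.mul (G.e s) (G.inv t)) (G.inv s)) (G.e t) :=
  G.mul_inv_rev he s t
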